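/- Let Γ be an infinite, connected, locally finite graph equipped with a cobounded quasi-action of a group G, and suppose vs(Γ) > 1. Then Γ contains exactly one maximal infinite 2-connected subgraph Γ₀, and there is a constant C such that every vertex of Γ lies within distance C of a vertex of Γ₀; consequently the inclusion of V(Γ₀), with the intrinsic graph metric of Γ₀, into V(Γ) is a quasi-isometry. -/

import Mathlib

/-!
Call `x` a pocket vertex if some vertex `v ≠ x` cuts it off into a finite component of `Γ - v`,
and let the core be the set of vertices lying in no pocket. The quasi-action moves any pocket next
to a fixed base point, where by local finiteness only finitely many vertices lie in finite
components of the complement of a ball; hence pockets have uniformly bounded depth, and the core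
is infinite and coarsely dense. A path between core vertices cannot enter a pocket, since it would
have to pass twice through the cut vertex, so the core induces an isometrically embedded connected
subgraph. As `vs(Γ) ≥ 2`, deleting a vertex leaves at most one infinite component, which makes this
subgraph 2-connected; conversely an infinite 2-connected subgraph meets no pocket, so it lies in
the core.
-/

open SimpleGraph

namespace Paper

variable {V W : Type*}

/-- Locally finite graph: every vertex has finite degree. -/
def LocFin (G : SimpleGraph V) : Prop := ∀ v : V, (G.neighborSet v).Finite

/-- All vertex degrees are at most `d`. -/
def DegLe (G : SimpleGraph V) (d : ℕ) : Prop :=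
  ∀ v : V, (G.neighborSet v).Finite ∧ (G.neighborSet v).ncard ≤ d

/-- Bounded valence. -/
def BddVal (G : SimpleGraph V) : Prop := ∃ d : ℕ, DegLe G d

/-- `(l, e)`-quasi-isometric embedding between the vertex sets of two graphs. -/
def IsQIE (G : SimpleGraph V) (H : SimpleGraph W) (l e : ℝ) (f : V → W) : Prop :=
  ∀ x y : V,
    (G.dist x y : ℝ) / l - e ≤ (H.dist (f x) (f y) : ℝ) ∧
      (H.dist (f x) (f y) : ℝ) ≤ l * (G.dist x y : ℝ) + e

/-- Coarse surjectivity: every vertex of the target lies within distance `e` of the image. -/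
def CoarseSurj (H : SimpleGraph W) (e : ℝ) (f : V → W) : Prop :=
  ∀ w : W, ∃ x : V, (H.dist w (f x) : ℝ) ≤ e

/-- `(l, e)`-quasi-isometry. -/
def IsQI (G : SimpleGraph V) (H : SimpleGraph W) (l e : ℝ) (f : V → W) : Prop :=
  IsQIE G H l e f ∧ CoarseSurj H e f

/-- `g` is an `h`-quasi-inverse of `f`. -/
def IsQInv (G : SimpleGraph V) (h : ℝ) (f : V → W) (g : W → V) : Prop :=
  ∀ x : V, (G.dist (g (f x)) x : ℝ) ≤ h

/-- Reachability by a walk all of whose vertices avoid the set `S`. -/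
def ReachOut (G : SimpleGraph V) (S : Set V) (a b : V) : Prop :=
  ∃ w : G.Walk a b, ∀ v ∈ w.support, v ∉ S

/-- A one-way infinite simple ray. -/
def RayIn (G : SimpleGraph V) (r : ℕ → V) : Prop :=
  Function.Injective r ∧ ∀ n : ℕ, G.Adj (r n) (r (n + 1))

/-- End-equivalence of rays: for every finite vertex set they have tails in the same
connected component of the graph with that set deleted. -/
def EndEquiv (G : SimpleGraph V) (r₁ r₂ : ℕ → V) : Prop :=
  ∀ S : Set V, S.Finite → ∃ N : ℕ, ∀ m n : ℕ, N ≤ m → N ≤ n → ReachOut G S (r₁ m) (r₂ n)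

/-- Two points (encoded as sequences: a constant sequence for a vertex, a ray for an end)
lie in distinct connected components of `G` with the vertex set `S` deleted. -/
def SepComps (G : SimpleGraph V) (S : Set V) (a b : ℕ → V) : Prop :=
  ∃ N : ℕ,
    (∀ m n : ℕ, N ≤ m → N ≤ n → ReachOut G S (a m) (a n)) ∧
    (∀ m n : ℕ, N ≤ m → N ≤ n → ReachOut G S (b m) (b n)) ∧
    (∀ m n : ℕ, N ≤ m → N ≤ n → ¬ ReachOut G S (a m) (b n))

/-- `vs(G) ≥ N`: any vertex set separating two ends has at least `N` elements. -/
def VsGe (G : SimpleGraph V) (N : ℕ) : Prop :=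
  ∀ r₁ r₂ : ℕ → V, RayIn G r₁ → RayIn G r₂ →
    ∀ S : Set V, S.Finite → SepComps G S r₁ r₂ → N ≤ S.ncard

/-- `vs(G) ≥ c` for a real threshold `c`. -/
def VsGeR (G : SimpleGraph V) (c : ℝ) : Prop :=
  ∀ r₁ r₂ : ℕ → V, RayIn G r₁ → RayIn G r₂ →
    ∀ S : Set V, S.Finite → SepComps G S r₁ r₂ → c ≤ (S.ncard : ℝ)

/-- `U` is a connected component of `G` with the vertex set `A` deleted. -/
def IsCompOut (G : SimpleGraph V) (A U : Set V) : Prop :=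
  ∃ a ∈ U, ∀ b : V, ReachOut G A a b ↔ b ∈ U

/-- The edge coboundary `δb` of a vertex set `b`. -/
def cob (G : SimpleGraph V) (b : Set V) : Set (Sym2 V) :=
  {e | ∃ x y : V, e = s(x, y) ∧ G.Adj x y ∧ x ∈ b ∧ y ∉ b}

/-- Membership in the Boolean ring `𝓑G` of vertex sets with finite coboundary. -/
def MemBX (G : SimpleGraph V) (b : Set V) : Prop := (cob G b).Finite

/-- The set of endpoints of the edges of `δb`. -/
def cobVerts (G : SimpleGraph V) (b : Set V) : Set V :=
  {v | ∃ w : V, s(v, w) ∈ cob G b}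

/-- A tight element: both sides induce connected subgraphs. -/
def Tight (G : SimpleGraph V) (b : Set V) : Prop :=
  (G.induce b).Connected ∧ (G.induce bᶜ).Connected

/-- Vertices of `A` that are endpoints of an edge with the other endpoint in `U`. -/
def AttachSet (G : SimpleGraph V) (A U : Set V) : Set V :=
  {v | v ∈ A ∧ ∃ u ∈ U, G.Adj v u}

/-- `incut(A) ≤ k` for a vertex set `A`, with the intrinsic metric of `G.induce A`. -/
def IncutBddSet (G : SimpleGraph V) (A : Set V) (k : ℕ) : Prop :=
  ∀ U : Set V, IsCompOut G A U →
    ∀ v w : A, (v : V) ∈ AttachSet G A U → (w : V) ∈ AttachSet G A U →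
      (G.induce A).dist v w ≤ k

/-- `outcut(A) ≤ k` for a vertex set `A`. -/
def OutcutBddSet (G : SimpleGraph V) (A : Set V) (k : ℕ) : Prop :=
  ∀ U : Set V, IsCompOut G A U → IncutBddSet G U k

/-- Uniform coboundary for a vertex set. -/
def UnifCobSet (G : SimpleGraph V) (A : Set V) : Prop :=
  (∃ k : ℕ, IncutBddSet G A k) ∧ (∃ k : ℕ, OutcutBddSet G A k)

/-- `incut(L) ≤ k` for a subgraph `L`, with its own intrinsic metric. -/
def IncutBddSub (G : SimpleGraph V) (L : G.Subgraph) (k : ℕ) : Prop :=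
  ∀ U : Set V, IsCompOut G L.verts U →
    ∀ v w : L.verts, (v : V) ∈ AttachSet G L.verts U → (w : V) ∈ AttachSet G L.verts U →
      L.coe.dist v w ≤ k

/-- `outcut(L) ≤ k` for a subgraph `L`. -/
def OutcutBddSub (G : SimpleGraph V) (L : G.Subgraph) (k : ℕ) : Prop :=
  ∀ U : Set V, IsCompOut G L.verts U → IncutBddSet G U k

/-- Uniform coboundary for a subgraph. -/
def UnifCobSub (G : SimpleGraph V) (L : G.Subgraph) : Prop :=
  (∃ k : ℕ, IncutBddSub G L k) ∧ (∃ k : ℕ, OutcutBddSub G L k)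

/-- Quasi-transitive graph: the automorphism group has finitely many orbits of vertices. -/
def QuasiTransitive (G : SimpleGraph V) : Prop :=
  ∃ F : Set V, F.Finite ∧ ∀ v : V, ∃ e : G ≃g G, ∃ w ∈ F, e w = v

/-- Hausdorff distance between two vertex sets is at most `r`. -/
def HausBdd (G : SimpleGraph V) (A B : Set V) (r : ℝ) : Prop :=
  (∀ a ∈ A, ∃ b ∈ B, (G.dist a b : ℝ) ≤ r) ∧ (∀ b ∈ B, ∃ a ∈ A, (G.dist a b : ℝ) ≤ r)

/-- Reachability by a walk avoiding the edge set `F`. -/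
def ReachAvoidE (G : SimpleGraph V) (F : Set (Sym2 V)) (a b : V) : Prop :=
  ∃ w : G.Walk a b, ∀ e ∈ w.edges, e ∉ F

/-- The ends of the rays `r₁`, `r₂` are separated by deleting the edge set `F`. -/
def SepEnds (G : SimpleGraph V) (F : Set (Sym2 V)) (r₁ r₂ : ℕ → V) : Prop :=
  ∃ N : ℕ, ∀ m n : ℕ, N ≤ m → N ≤ n → ¬ ReachAvoidE G F (r₁ m) (r₂ n)

/-- Accessibility: some `k ≥ 1` such that any two distinct ends can be separated by
deleting at most `k` edges. -/
def Accessible (G : SimpleGraph V) : Prop :=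
  ∃ k : ℕ, 1 ≤ k ∧ ∀ r₁ r₂ : ℕ → V, RayIn G r₁ → RayIn G r₂ → ¬ EndEquiv G r₁ r₂ →
    ∃ F : Set (Sym2 V), F.Finite ∧ F.ncard ≤ k ∧ SepEnds G F r₁ r₂

/-- `l`-quasi-action of a group on the vertex set of a graph. -/
def IsQAct {G₀ : Type*} [Group G₀] (G : SimpleGraph V) (l : ℝ) (φ : G₀ → V → V) : Prop :=
  (∀ g : G₀, IsQI G G l l (φ g)) ∧
  (∀ (g h : G₀) (x : V), (G.dist (φ (g * h) x) (φ g (φ h x)) : ℝ) ≤ l) ∧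
  (∀ g : G₀, IsQInv G l (φ g) (φ g⁻¹) ∧ IsQInv G l (φ g⁻¹) (φ g))

/-- `B`-cobounded quasi-action. -/
def Cobdd {G₀ : Type*} [Group G₀] (G : SimpleGraph V) (B : ℝ) (φ : G₀ → V → V) : Prop :=
  ∀ x y : V, ∃ g : G₀, (G.dist x (φ g y) : ℝ) ≤ B

/-- The diameter (in `ℕ`) of a vertex set. -/
noncomputable def setDiam (G : SimpleGraph V) (S : Set V) : ℕ :=
  sSup {d : ℕ | ∃ x ∈ S, ∃ y ∈ S, G.dist x y = d}

/-- 2-connected: connected, at least three vertices, and deleting any single vertex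
leaves it connected. -/
def TwoConnected (G : SimpleGraph V) : Prop :=
  G.Connected ∧ (∃ a b c : V, a ≠ b ∧ a ≠ c ∧ b ≠ c) ∧
    ∀ v : V, (G.induce {w : V | w ≠ v}).Connected

/-- Tree decomposition. -/
def IsTreeDecomp {VT : Type*} (X : SimpleGraph V) (T : SimpleGraph VT) (B : VT → Set V) :
    Prop :=
  T.IsTree ∧ (∀ x : V, ∃ u : VT, x ∈ B u) ∧
    ∀ u v w : VT, (∃ p : T.Walk u w, p.IsPath ∧ v ∈ p.support) → B u ∩ B w ⊆ B v

/-- Bounded adhesion. -/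
def BddAdhesion {VT : Type*} (T : SimpleGraph VT) (B : VT → Set V) : Prop :=
  ∃ N : ℕ, ∀ u w : VT, T.Adj u w → (B u ∩ B w).Finite ∧ (B u ∩ B w).ncard ≤ N

/-- Connected parts. -/
def ConnParts {VT : Type*} (X : SimpleGraph V) (B : VT → Set V) : Prop :=
  ∀ u : VT, (X.induce (B u)).Connected

/-- Replacing each bag by its closed `r`-neighbourhood. -/
def ballBag {VT : Type*} (X : SimpleGraph V) (B : VT → Set V) (r : ℕ) : VT → Set V :=
  fun u => {x : V | ∃ y ∈ B u, X.dist x y ≤ r}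

/-- A point of `G` which is either a vertex lying outside `B(S;R)` (encoded as a constant
sequence) or an end (encoded as a ray representing it). -/
def PtSeq (G : SimpleGraph V) (S : Set V) (R : ℝ) (a : ℕ → V) : Prop :=
  (∃ v : V, a = Function.const ℕ v ∧ ∀ s ∈ S, R < (G.dist v s : ℝ)) ∨ RayIn G a

/-- A subring of `𝓑G`: contains `∅`, and is closed under intersection and
symmetric difference. -/
def IsSubring (G : SimpleGraph V) (R : Set (Set V)) : Prop :=
  (∀ b ∈ R, MemBX G b) ∧ ∅ ∈ R ∧
    (∀ a ∈ R, ∀ b ∈ R, a ∩ b ∈ R) ∧ (∀ a ∈ R, ∀ b ∈ R, symmDiff a b ∈ R)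

/-- The subring generated by a family. -/
def genSubring (G : SimpleGraph V) (E : Set (Set V)) : Set (Set V) :=
  ⋂₀ {R : Set (Set V) | IsSubring G R ∧ E ⊆ R}

/-- Two vertex sets are nested. -/
def Nested (a b : Set V) : Prop :=
  a ∩ b = ∅ ∨ a ∩ bᶜ = ∅ ∨ aᶜ ∩ b = ∅ ∨ aᶜ ∩ bᶜ = ∅

/-- A nested family: closed under complementation and pairwise nested. -/
def NestedFam (E : Set (Set V)) : Prop :=
  (∀ b ∈ E, bᶜ ∈ E) ∧ ∀ a ∈ E, ∀ b ∈ E, Nested a b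

/-- A `G₀`-invariant family of vertex sets. -/
def GInvFam (G₀ : Type*) [Group G₀] [MulAction G₀ V] (E : Set (Set V)) : Prop :=
  ∀ g : G₀, ∀ b ∈ E, (fun x => g • x) '' b ∈ E

/-- A `G₀`-finite family of vertex sets: it meets only finitely many orbits. -/
def GFinFam (G₀ : Type*) [Group G₀] [MulAction G₀ V] (E : Set (Set V)) : Prop :=
  ∃ F : Set (Set V), F.Finite ∧ F ⊆ E ∧
    ∀ b ∈ E, ∃ g : G₀, ∃ c ∈ F, (fun x => g • x) '' c = b

/-- `g` stabilises the subgraph `L` setwise. -/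
def StabSub {G₀ : Type*} [Group G₀] [MulAction G₀ V] (G : SimpleGraph V) (g : G₀)
    (L : G.Subgraph) : Prop :=
  (∀ v : V, v ∈ L.verts ↔ g • v ∈ L.verts) ∧
    (∀ a b : V, L.Adj a b ↔ L.Adj (g • a) (g • b))

end Paper

lemma SimpleGraph.Walk.IsPath.eq_of_mem_support_takeUntil_of_mem_support_dropUntil
    {V : Type*} [DecidableEq V] {G : SimpleGraph V} {u v w x : V} {p : G.Walk u v} (hp : p.IsPath)
    (hw : w ∈ p.support) (h₁ : x ∈ (p.takeUntil w hw).support)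
    (h₂ : x ∈ (p.dropUntil w hw).support) : x = w := by
  have hnodup := hp.support_nodup
  rw [← p.take_spec hw, Walk.support_append] at hnodup
  by_contra hxw
  have h₂' : x ∈ (p.dropUntil w hw).support.tail := by
    rw [← Walk.cons_tail_support] at h₂
    exact (List.mem_cons.1 h₂).resolve_left hxw
  exact List.disjoint_of_nodup_append hnodup h₁ h₂'

namespace Paper

variable {V : Type*} {Γ : SimpleGraph V} {S : Set V} {v x y z : V}

lemma ReachOut.refl (hx : x ∉ S) : ReachOut Γ S x x :=
  ⟨.nil, by simpa using hx⟩

lemma ReachOut.symm (h : ReachOut Γ S x y) : ReachOut Γ S y x := by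
  obtain ⟨W, hW⟩ := h
  exact ⟨W.reverse, by simpa using hW⟩

lemma ReachOut.trans (h : ReachOut Γ S x y) (h' : ReachOut Γ S y z) : ReachOut Γ S x z := by
  obtain ⟨W, hW⟩ := h
  obtain ⟨W', hW'⟩ := h'
  exact ⟨W.append W', fun u hu => ((Walk.mem_support_append_iff _ _).1 hu).elim (hW u) (hW' u)⟩

lemma ReachOut.notMem_left (h : ReachOut Γ S x y) : x ∉ S :=
  h.elim fun W hW => hW x W.start_mem_support

lemma reachOut_of_adj (h : Γ.Adj x y) (hx : x ∉ S) (hy : y ∉ S) : ReachOut Γ S x y :=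
  ⟨.cons h .nil, by simp [hx, hy]⟩

lemma reachOut_singleton_of_notMem_support (W : Γ.Walk x y) (hv : v ∉ W.support) :
    ReachOut Γ {v} x y :=
  ⟨W, fun _ hu h => hv (Set.mem_singleton_iff.1 h ▸ hu)⟩

lemma reachOut_singleton_of_dist_lt (hc : Γ.Connected) (h : Γ.dist x y < Γ.dist x v) :
    ReachOut Γ {v} x y := by
  classical
  obtain ⟨P, hP⟩ := hc.exists_walk_length_eq_dist x y
  refine reachOut_singleton_of_notMem_support P fun hv => h.not_ge ?_
  calc Γ.dist x v ≤ (P.takeUntil v hv).length := dist_le _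
    _ ≤ P.length := P.length_takeUntil_le_length hv
    _ = Γ.dist x y := hP

/-- `∅` when `x ∈ S`. -/
def compOut (Γ : SimpleGraph V) (S : Set V) (x : V) : Set V := {w | ReachOut Γ S x w}

lemma compOut_eq_of_reachOut (h : ReachOut Γ S x y) : compOut Γ S x = compOut Γ S y :=
  Set.ext fun _ => ⟨h.symm.trans, h.trans⟩

lemma finite_setOf_dist_le (hc : Γ.Connected) (hlf : LocFin Γ) (o : V) (n : ℕ) :
    {w | Γ.dist o w ≤ n}.Finite := by
  induction n with
  | zero =>
    refine (Set.finite_singleton o).subset fun w hw => ?_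
    exact (hc.dist_eq_zero_iff.1 (Nat.le_zero.1 hw)).symm
  | succ n ih =>
    refine (ih.union (ih.biUnion fun u _ => hlf u)).subset fun w hw => ?_
    rcases (Nat.le_succ_iff.1 hw) with hw | hw
    · exact Or.inl hw
    obtain ⟨P, hP⟩ := hc.exists_walk_length_eq_dist w o
    rw [SimpleGraph.dist_comm, hw] at hP
    obtain ⟨u, hwu, Q, rfl⟩ := P.exists_eq_cons_of_ne (fun h => by simp [h] at hw)
    refine Or.inr (Set.mem_biUnion (x := u) ?_ hwu.symm)
    have hQ : Q.length = n := by simpa using hP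
    rw [Set.mem_ofPred_eq, SimpleGraph.dist_comm, ← hQ]
    exact dist_le Q

lemma exists_adj_reachOut_insert (hxy : x ≠ y) (h : ReachOut Γ S x y) :
    ∃ u, Γ.Adj x u ∧ ReachOut Γ (insert x S) u y := by
  classical
  obtain ⟨W, hW⟩ := h
  obtain ⟨u, hxu, Q, hQ⟩ := W.bypass.exists_eq_cons_of_ne hxy
  have hpath := W.bypass_isPath
  rw [hQ, Walk.cons_isPath_iff] at hpath
  refine ⟨u, hxu, Q, fun w hw => ?_⟩
  simp only [Set.mem_insert_iff, not_or]
  refine ⟨fun h => hpath.2 (h ▸ hw), hW w (W.support_bypass_subset_support ?_)⟩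
  rw [hQ, Walk.support_cons]
  exact List.mem_cons_of_mem _ hw

lemma exists_adj_infinite_compOut (hlf : LocFin Γ) (hinf : (compOut Γ S x).Infinite) :
    ∃ u, Γ.Adj x u ∧ u ∉ insert x S ∧ (compOut Γ (insert x S) u).Infinite := by
  by_contra! hfin
  refine hinf (((hlf x).biUnion (t := compOut Γ (insert x S)) fun u hu => ?_).insert x
    |>.subset fun w hw => ?_)
  · by_cases hu' : u ∈ insert x S
    · exact Set.finite_empty.subset fun w hw => hw.notMem_left hu'
    · exact hfin u hu hu'
  · rcases eq_or_ne x w with rfl | hne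
    · exact Set.mem_insert _ _
    obtain ⟨u, hxu, hu⟩ := exists_adj_reachOut_insert hne hw
    exact Set.mem_insert_of_mem _ (Set.mem_biUnion hxu hu)

/-- Greedy construction: keep walking to a neighbour whose component, after deleting everything
visited so far, is still infinite. -/
lemma exists_rayIn_of_infinite_compOut (hlf : LocFin Γ) (hx : x ∉ S)
    (hinf : (compOut Γ S x).Infinite) : ∃ r : ℕ → V, RayIn Γ r ∧ ∀ n, r n ∈ compOut Γ S x := by
  have hstep : ∀ p : V × Set V, (compOut Γ p.2 p.1).Infinite →
      ∃ u, Γ.Adj p.1 u ∧ u ∉ insert p.1 p.2 ∧ (compOut Γ (insert p.1 p.2) u).Infinite :=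
    fun _ => exists_adj_infinite_compOut hlf
  have : Nonempty V := ⟨x⟩
  choose! f hadj hnotMem hf using hstep
  let s : ℕ → V × Set V := fun n => n.rec (x, S) fun _ p => (f p, insert p.1 p.2)
  have hs : ∀ n, s (n + 1) = (f (s n), insert (s n).1 (s n).2) := fun _ => rfl
  have hinv : ∀ n, (s n).1 ∉ (s n).2 ∧ (compOut Γ (s n).2 (s n).1).Infinite := by
    intro n
    induction n with
    | zero => exact ⟨hx, hinf⟩
    | succ n ih => rw [hs]; exact ⟨hnotMem _ ih.2, hf _ ih.2⟩
  have hS : ∀ n, S ⊆ (s n).2 := by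
    intro n
    induction n with
    | zero => exact subset_rfl
    | succ n ih => rw [hs]; exact ih.trans (Set.subset_insert _ _)
  have hvisited : ∀ m n, m < n → (s m).1 ∈ (s n).2 := by
    intro m n hmn
    induction n with
    | zero => omega
    | succ n ih =>
      rw [hs]
      rcases Nat.lt_succ_iff_lt_or_eq.1 hmn with h | rfl
      · exact Set.mem_insert_of_mem _ (ih h)
      · exact Set.mem_insert _ _
  refine ⟨fun n => (s n).1, ⟨?_, fun n => hadj _ (hinv n).2⟩, fun n => ?_⟩
  · refine Function.Injective.of_lt_imp_ne fun m n hmn h => (hinv n).1 ?_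
    exact h ▸ hvisited m n hmn
  · induction n with
    | zero => exact ReachOut.refl hx
    | succ n ih =>
      exact ih.trans (reachOut_of_adj (hadj _ (hinv n).2) (fun h => (hinv n).1 (hS n h))
        fun h => (hinv (n + 1)).1 (hS (n + 1) h))

lemma reachOut_of_infinite_compOut (hlf : LocFin Γ) (hS : S.Finite) (hvs : VsGe Γ (S.ncard + 1))
    (hx : x ∉ S) (hy : y ∉ S) (hxi : (compOut Γ S x).Infinite) (hyi : (compOut Γ S y).Infinite) :
    ReachOut Γ S x y := by
  by_contra hxy
  obtain ⟨r₁, hr₁, h₁⟩ := exists_rayIn_of_infinite_compOut hlf hx hxi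
  obtain ⟨r₂, hr₂, h₂⟩ := exists_rayIn_of_infinite_compOut hlf hy hyi
  have := hvs r₁ r₂ hr₁ hr₂ S hS ⟨0, fun m n _ _ => (h₁ m).symm.trans (h₁ n),
    fun m n _ _ => (h₂ m).symm.trans (h₂ n),
    fun m n _ _ h => hxy ((h₁ m).trans (h.trans (h₂ n).symm))⟩
  omega

section QuasiAction

variable {G₀ : Type*} [Group G₀] {l B : ℝ} {φ : G₀ → V → V}

lemma IsQAct.dist_map_le (hqa : IsQAct Γ l φ) (g : G₀) (x y : V) :
    Γ.dist (φ g x) (φ g y) ≤ ⌈l⌉₊ * Γ.dist x y + ⌈l⌉₊ := by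
  have hL : l ≤ ⌈l⌉₊ := Nat.le_ceil l
  have : (Γ.dist (φ g x) (φ g y) : ℝ) ≤ ⌈l⌉₊ * Γ.dist x y + ⌈l⌉₊ :=
    ((hqa.1 g).1 x y).2.trans (by gcongr)
  exact_mod_cast this

lemma IsQAct.dist_le_dist_map (hl : 0 < l) (hqa : IsQAct Γ l φ) (g : G₀) (x y : V) :
    Γ.dist x y ≤ ⌈l⌉₊ * Γ.dist (φ g x) (φ g y) + ⌈l⌉₊ * ⌈l⌉₊ := by
  have hL : l ≤ ⌈l⌉₊ := Nat.le_ceil l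
  have h := ((hqa.1 g).1 x y).1
  rw [sub_le_iff_le_add, div_le_iff₀ hl] at h
  have : (Γ.dist x y : ℝ) ≤ ⌈l⌉₊ * Γ.dist (φ g x) (φ g y) + ⌈l⌉₊ * ⌈l⌉₊ :=
    h.trans (by nlinarith [(Nat.cast_nonneg _ : (0 : ℝ) ≤ Γ.dist (φ g x) (φ g y))])
  exact_mod_cast this

lemma IsQAct.dist_map_inv_map_le (hqa : IsQAct Γ l φ) (g : G₀) (x : V) :
    Γ.dist (φ g⁻¹ (φ g x)) x ≤ ⌈l⌉₊ := by
  exact_mod_cast ((hqa.2.2 g).1 x).trans (Nat.le_ceil l)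

lemma IsQAct.dist_map_map_inv_le (hqa : IsQAct Γ l φ) (g : G₀) (x : V) :
    Γ.dist (φ g (φ g⁻¹ x)) x ≤ ⌈l⌉₊ := by
  exact_mod_cast ((hqa.2.2 g).2 x).trans (Nat.le_ceil l)

lemma Cobdd.exists_dist_le (hcb : Cobdd Γ B φ) (x y : V) : ∃ g, Γ.dist x (φ g y) ≤ ⌈B⌉₊ := by
  obtain ⟨g, hg⟩ := hcb x y
  exact ⟨g, by exact_mod_cast hg.trans (Nat.le_ceil B)⟩

end QuasiAction

def IsPocket (Γ : SimpleGraph V) (v x : V) : Prop := x ≠ v ∧ (compOut Γ {v} x).Finite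

lemma IsPocket.of_reachOut (h : IsPocket Γ v y) (hxy : ReachOut Γ {v} x y) : IsPocket Γ v x :=
  ⟨fun hxv => hxy.notMem_left hxv, compOut_eq_of_reachOut hxy ▸ h.2⟩

lemma exists_mem_compOut_adj (hc : Γ.Preconnected) (hz : z ∉ S) (hS : S.Nonempty) :
    ∃ a ∈ compOut Γ S z, ∃ u ∈ S, Γ.Adj a u := by
  obtain ⟨o, ho⟩ := hS
  obtain ⟨W⟩ := hc z o
  induction W with
  | nil => exact absurd ho hz
  | @cons a b _ hab W ih =>
    by_cases hb : b ∈ S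
    · exact ⟨a, ReachOut.refl hz, b, hb, hab⟩
    · obtain ⟨c, hbc, u, hu, hcu⟩ := ih hb ho
      exact ⟨c, (reachOut_of_adj hab hz hb).trans hbc, u, hu, hcu⟩

lemma finite_setOf_finite_compOut (hc : Γ.Preconnected) (hlf : LocFin Γ) (hS : S.Finite)
    (hne : S.Nonempty) : {z | z ∉ S ∧ (compOut Γ S z).Finite}.Finite := by
  have hattach : {a | a ∉ S ∧ (∃ u ∈ S, Γ.Adj a u) ∧ (compOut Γ S a).Finite}.Finite :=
    (hS.biUnion fun u _ => hlf u).subset fun a ⟨_, ⟨u, hu, hau⟩, _⟩ =>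
      Set.mem_biUnion hu hau.symm
  refine (hattach.biUnion fun a ha => ha.2.2).subset fun z ⟨hz, hzfin⟩ => ?_
  obtain ⟨a, hza, u, hu, hau⟩ := exists_mem_compOut_adj hc hz hne
  have hcomp := compOut_eq_of_reachOut hza
  exact Set.mem_biUnion ⟨hza.symm.notMem_left, ⟨u, hu, hau⟩, hcomp ▸ hzfin⟩ hza.symm

lemma reachOut_map_of_walk (hc : Γ.Connected) {f : V → V} {K : ℕ}
    (hf : ∀ p q, Γ.Adj p q → Γ.dist (f p) (f q) ≤ K) {a b : V} (W : Γ.Walk a b)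
    (hfar : ∀ p ∈ W.support, K < Γ.dist (f p) v) : ReachOut Γ {v} (f a) (f b) := by
  induction W with
  | nil => exact ReachOut.refl fun h => by simp [Set.mem_singleton_iff.1 h] at hfar
  | @cons p q _ hpq W ih =>
    refine (reachOut_singleton_of_dist_lt hc ((hf p q hpq).trans_lt (hfar p (by simp)))).trans ?_
    exact ih fun r hr => hfar r (by simp [hr])

/-- Pulling a walk that avoids a large ball around `φ g v` back by `φ g⁻¹` keeps it inside the
component of `Γ - v` containing `x`, so the image of a pocket stays in a finite component. -/
lemma finite_compOut_map_of_isPocket {G₀ : Type*} [Group G₀] {l : ℝ} {φ : G₀ → V → V}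
    (hc : Γ.Connected) (hlf : LocFin Γ) (hqa : IsQAct Γ l φ) (g : G₀) (hpock : IsPocket Γ v x)
    (hS : ∀ w, Γ.dist (φ g v) w ≤ 2 * ⌈l⌉₊ * ⌈l⌉₊ + 2 * ⌈l⌉₊ → w ∈ S) (hx : φ g x ∉ S) :
    (compOut Γ S (φ g x)).Finite := by
  set L := ⌈l⌉₊
  have hfar : ∀ w ∉ S, 2 * L < Γ.dist (φ g⁻¹ w) v := by
    intro w hw
    by_contra! hle
    refine hw (hS w ?_)
    rw [SimpleGraph.dist_comm] at hle
    calc Γ.dist (φ g v) w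
        ≤ Γ.dist (φ g v) (φ g (φ g⁻¹ w)) + Γ.dist (φ g (φ g⁻¹ w)) w := hc.dist_triangle
      _ ≤ (L * Γ.dist v (φ g⁻¹ w) + L) + L :=
          add_le_add (hqa.dist_map_le g _ _) (hqa.dist_map_map_inv_le g w)
      _ ≤ 2 * L * L + 2 * L := by nlinarith
  have hstart : ReachOut Γ {v} x (φ g⁻¹ (φ g x)) := by
    refine reachOut_singleton_of_dist_lt hc ?_
    have h₁ := hfar _ hx
    have h₂ := hqa.dist_map_inv_map_le g x
    have h₃ := hc.dist_triangle (u := φ g⁻¹ (φ g x)) (v := x) (w := v)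
    rw [SimpleGraph.dist_comm]
    omega
  obtain ⟨D, hD⟩ := (hpock.2.image (Γ.dist x)).bddAbove
  refine (finite_setOf_dist_le hc hlf (φ g x) (L * D + 2 * L)).subset fun w ⟨W, hW⟩ => ?_
  have hedge : ∀ p q, Γ.Adj p q → Γ.dist (φ g⁻¹ p) (φ g⁻¹ q) ≤ 2 * L := fun p q hpq => by
    have := hqa.dist_map_le g⁻¹ p q
    rw [dist_eq_one_iff_adj.2 hpq] at this
    omega
  have hxw : Γ.dist x (φ g⁻¹ w) ≤ D :=
    hD ⟨_, hstart.trans (reachOut_map_of_walk hc hedge W fun p hp => hfar p (hW p hp)), rfl⟩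
  calc Γ.dist (φ g x) w
      ≤ Γ.dist (φ g x) (φ g (φ g⁻¹ w)) + Γ.dist (φ g (φ g⁻¹ w)) w := hc.dist_triangle
    _ ≤ (L * Γ.dist x (φ g⁻¹ w) + L) + L :=
        add_le_add (hqa.dist_map_le g _ _) (hqa.dist_map_map_inv_le g w)
    _ ≤ L * D + 2 * L := by nlinarith

/-- Move the pocket next to a base point `o`: the image of `x` is then either in a fixed ball
around `o` or in one of the finitely many finite components of its complement. -/
lemma exists_forall_isPocket_dist_le {G₀ : Type*} [Group G₀] {l B : ℝ} {φ : G₀ → V → V}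
    (hc : Γ.Connected) (hlf : LocFin Γ) (hl : 0 < l) (hqa : IsQAct Γ l φ) (hcb : Cobdd Γ B φ) :
    ∃ R, ∀ v x, IsPocket Γ v x → Γ.dist v x ≤ R := by
  obtain ⟨o⟩ := hc.nonempty
  set r := ⌈B⌉₊ + (2 * ⌈l⌉₊ * ⌈l⌉₊ + 2 * ⌈l⌉₊)
  have hball := finite_setOf_dist_le hc hlf o r
  obtain ⟨M, hM⟩ := ((finite_setOf_finite_compOut hc.preconnected hlf hball ⟨o, by simp⟩).image
    (Γ.dist o)).bddAbove
  refine ⟨⌈l⌉₊ * (⌈B⌉₊ + max r M) + ⌈l⌉₊ * ⌈l⌉₊, fun v x hpock => ?_⟩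
  obtain ⟨g, hg⟩ := hcb.exists_dist_le o v
  have hgx : Γ.dist o (φ g x) ≤ max r M := by
    by_cases hx : Γ.dist o (φ g x) ≤ r
    · exact le_max_of_le_left hx
    refine le_max_of_le_right (hM ⟨_, ⟨hx, ?_⟩, rfl⟩)
    refine finite_compOut_map_of_isPocket hc hlf hqa g hpock (fun w hw => ?_) hx
    have := hc.dist_triangle (u := o) (v := φ g v) (w := w)
    simp only [Set.mem_ofPred_eq]
    omega
  have := hc.dist_triangle (u := φ g v) (v := o) (w := φ g x)
  rw [SimpleGraph.dist_comm] at hg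
  calc Γ.dist v x ≤ ⌈l⌉₊ * Γ.dist (φ g v) (φ g x) + ⌈l⌉₊ * ⌈l⌉₊ := hqa.dist_le_dist_map hl g v x
    _ ≤ ⌈l⌉₊ * (⌈B⌉₊ + max r M) + ⌈l⌉₊ * ⌈l⌉₊ := by gcongr; omega

lemma not_isPocket_of_isPocket [Infinite V] (hc : Γ.Connected) (h : IsPocket Γ y x) :
    ¬ IsPocket Γ x y := by
  classical
  intro h'
  refine Set.infinite_univ ((h.2.union h'.2).subset fun z _ => ?_)
  rcases eq_or_ne z y with rfl | hzy
  · exact Or.inr (ReachOut.refl h.1.symm)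
  obtain ⟨P, hP⟩ := hc.exists_isPath z x
  by_cases hy : y ∈ P.support
  · exact Or.inr (reachOut_singleton_of_notMem_support (P.takeUntil y hy)
      (Walk.endpoint_notMem_support_takeUntil hP hy h.1)).symm
  · exact Or.inl (reachOut_singleton_of_notMem_support P hy).symm

lemma IsPocket.trans [Infinite V] (hc : Γ.Connected) (h₁ : IsPocket Γ y x)
    (h₂ : IsPocket Γ z y) : IsPocket Γ z x := by
  classical
  refine ⟨?_, (h₁.2.union h₂.2).subset fun w ⟨W, hW⟩ => ?_⟩
  · rintro rfl
    exact not_isPocket_of_isPocket hc h₁ h₂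
  by_cases hy : y ∈ W.support
  · exact Or.inr ⟨W.dropUntil y hy, fun u hu => hW u (W.support_dropUntil_subset_support hy hu)⟩
  · exact Or.inl (reachOut_singleton_of_notMem_support W hy)

def core (Γ : SimpleGraph V) : Set V := {x | ∀ v, ¬ IsPocket Γ v x}

/-- An outermost pocket containing `x` is cut off by a vertex of the core. -/
lemma exists_mem_core_isPocket [Infinite V] (hc : Γ.Connected) (hlf : LocFin Γ) {R : ℕ}
    (hR : ∀ v x, IsPocket Γ v x → Γ.dist v x ≤ R) (hx : x ∉ core Γ) :
    ∃ v ∈ core Γ, IsPocket Γ v x := by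
  have : IsStrictOrder V (IsPocket Γ) :=
    { irrefl := fun _ h => h.1 rfl
      trans := fun _ _ _ h₁ h₂ => h₂.trans hc h₁ }
  obtain ⟨v, hv⟩ : ∃ v, IsPocket Γ v x := by simpa [core] using hx
  have hfin : {v | IsPocket Γ v x}.Finite :=
    (finite_setOf_dist_le hc hlf x R).subset fun v hv => by
      simpa [SimpleGraph.dist_comm] using hR v x hv
  obtain ⟨⟨m, hm⟩, -, hmin⟩ :=
    (hfin.wellFoundedOn (r := IsPocket Γ)).has_min Set.univ ⟨⟨v, hv⟩, trivial⟩
  exact ⟨m, fun w hw => hmin ⟨w, hm.trans hc hw⟩ trivial hw, hm⟩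

lemma exists_mem_core_dist_le [Infinite V] (hc : Γ.Connected) (hlf : LocFin Γ) {R : ℕ}
    (hR : ∀ v x, IsPocket Γ v x → Γ.dist v x ≤ R) (x : V) : ∃ v ∈ core Γ, Γ.dist x v ≤ R := by
  by_cases hx : x ∈ core Γ
  · exact ⟨x, hx, by simp⟩
  obtain ⟨v, hv, hpock⟩ := exists_mem_core_isPocket hc hlf hR hx
  exact ⟨v, hv, SimpleGraph.dist_comm (G := Γ) ▸ hR v x hpock⟩

lemma core_infinite [Infinite V] (hc : Γ.Connected) (hlf : LocFin Γ) {R : ℕ}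
    (hR : ∀ v x, IsPocket Γ v x → Γ.dist v x ≤ R) : (core Γ).Infinite := fun hfin =>
  Set.infinite_univ <| (hfin.biUnion fun v _ => finite_setOf_dist_le hc hlf v R).subset
    fun x _ => by
      obtain ⟨v, hv, hd⟩ := exists_mem_core_dist_le hc hlf hR x
      exact Set.mem_biUnion hv (by simpa [SimpleGraph.dist_comm] using hd)

/-- A pocket can only be entered and left through its cut vertex, which a path visits once. -/
lemma mem_core_of_mem_support_of_isPath {P : Γ.Walk x y} (hP : P.IsPath) (hx : x ∈ core Γ)
    (hy : y ∈ core Γ) {u : V} (hu : u ∈ P.support) : u ∈ core Γ := by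
  classical
  intro v hpock
  have h₁ : v ∈ (P.takeUntil u hu).support := by
    by_contra hv
    exact hx v (hpock.of_reachOut (reachOut_singleton_of_notMem_support _ hv))
  have h₂ : v ∈ (P.dropUntil u hu).support := by
    by_contra hv
    exact hy v (hpock.of_reachOut (reachOut_singleton_of_notMem_support _ hv).symm)
  exact hpock.1 (hP.eq_of_mem_support_takeUntil_of_mem_support_dropUntil hu h₁ h₂).symm

lemma reachOut_of_mem_core (hlf : LocFin Γ) (hvs : VsGe Γ 2) (hx : x ∈ core Γ) (hy : y ∈ core Γ)
    (hxv : x ≠ v) (hyv : y ≠ v) : ReachOut Γ {v} x y :=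
  reachOut_of_infinite_compOut hlf (Set.finite_singleton v) (by rwa [Set.ncard_singleton]) hxv hyv
    (fun hfin => hx v ⟨hxv, hfin⟩) fun hfin => hy v ⟨hyv, hfin⟩

lemma subset_core_of_twoConnected {L : Γ.Subgraph} (hL : TwoConnected L.coe)
    (hLi : L.verts.Infinite) : L.verts ⊆ core Γ := by
  intro x hx v hpock
  obtain ⟨y, hyL, hy⟩ := (hLi.sdiff (hpock.2.union (Set.finite_singleton v))).nonempty
  simp only [Set.mem_union, Set.mem_singleton_iff, not_or] at hy
  refine hy.1 ?_
  by_cases hv : v ∈ L.verts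
  · obtain ⟨W⟩ := (hL.2.2 ⟨v, hv⟩).preconnected ⟨⟨x, hx⟩, fun h => hpock.1 congr(($h).1)⟩
      ⟨⟨y, hyL⟩, fun h => hy.2 congr(($h).1)⟩
    have hWv : ∀ u ∈ (W.map (L.hom.comp (Embedding.induce _).toHom)).support, u ≠ v := by
      simp only [Walk.support_map, List.mem_map]
      rintro _ ⟨⟨⟨w, _⟩, hwv⟩, -, rfl⟩ hwv'
      exact hwv (Subtype.ext hwv')
    exact ⟨_, fun u hu huv => hWv u hu huv⟩
  · obtain ⟨W⟩ := hL.1.preconnected ⟨x, hx⟩ ⟨y, hyL⟩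
    have hWv : ∀ u ∈ (W.map L.hom).support, u ≠ v := by
      simp only [Walk.support_map, List.mem_map]
      rintro _ ⟨⟨w, hw⟩, -, rfl⟩ rfl
      exact hv hw
    exact ⟨_, fun u hu huv => hWv u hu huv⟩

section Induce

variable {s : Set V}
  (hs : ∀ ⦃x y⦄ (P : Γ.Walk x y), P.IsPath → x ∈ s → y ∈ s → ∀ u ∈ P.support, u ∈ s)
include hs

lemma exists_walk_induce_length_eq_dist (hc : Γ.Connected) (a b : s) :
    ∃ W : (Γ.induce s).Walk a b, W.length = Γ.dist a b := by
  obtain ⟨P, hP⟩ := hc.exists_walk_length_eq_dist a b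
  have hPs := hs P (P.isPath_of_length_eq_dist hP) a.2 b.2
  refine ⟨P.induce s hPs, ?_⟩
  have := congrArg Walk.length (P.map_induce hPs)
  rw [Walk.length_map] at this
  exact this.trans hP

lemma dist_induce_eq (hc : Γ.Connected) (a b : s) : (Γ.induce s).dist a b = Γ.dist a b := by
  obtain ⟨W, hW⟩ := exists_walk_induce_length_eq_dist hs hc a b
  obtain ⟨Q, hQ⟩ := (Walk.reachable W).exists_walk_length_eq_dist
  refine le_antisymm (hW ▸ dist_le W) ?_
  rw [← hQ, ← Walk.length_map (Embedding.induce s).toHom]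
  exact dist_le _

lemma twoConnected_induce (hc : Γ.Connected) (h3 : 3 ≤ s.encard)
    (hdel : ∀ v ∈ s, ∀ x ∈ s, ∀ y ∈ s, x ≠ v → y ≠ v → ReachOut Γ {v} x y) :
    TwoConnected (Γ.induce s) := by
  classical
  obtain ⟨t, hts, ht⟩ := Set.exists_subset_encard_eq h3
  obtain ⟨a, b, c, hab, hac, hbc, rfl⟩ := Set.encard_eq_three.1 ht
  have ha : a ∈ s := hts (by simp)
  have hb : b ∈ s := hts (by simp)
  refine ⟨(connected_iff _).2 ⟨fun x y => ?_, ⟨⟨a, ha⟩⟩⟩,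
    ⟨⟨a, ha⟩, ⟨b, hb⟩, ⟨c, hts (by simp)⟩, by simpa, by simpa, by simpa⟩,
    fun v => (connected_iff _).2 ⟨?_, ?_⟩⟩
  · exact (exists_walk_induce_length_eq_dist hs hc x y).elim fun W _ => W.reachable
  · rintro ⟨⟨x, hx⟩, hxv⟩ ⟨⟨y, hy⟩, hyv⟩
    obtain ⟨W, hW⟩ := hdel v v.2 x hx y hy (fun h => hxv (Subtype.ext h))
      (fun h => hyv (Subtype.ext h))
    have hPs := hs W.bypass W.bypass_isPath hx hy
    refine ⟨(W.bypass.induce s hPs).induce {w | w ≠ v} fun u hu h => ?_⟩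
    simp only [Walk.support_induce, List.mem_attachWith] at hu
    exact hW u.1 (W.support_bypass_subset_support hu) (h ▸ rfl)
  · by_cases hav : ⟨a, ha⟩ = v
    · exact ⟨⟨⟨b, hb⟩, fun h => hab congr(($(hav.trans h.symm)).1)⟩⟩
    · exact ⟨⟨⟨a, ha⟩, hav⟩⟩

end Induce

lemma isQI_val_of_dist_eq (L : Γ.Subgraph) (hdist : ∀ a b : L.verts, L.coe.dist a b = Γ.dist a b)
    {R : ℕ} (hR : ∀ v, ∃ w ∈ L.verts, Γ.dist v w ≤ R) : IsQI L.coe Γ 1 R (fun v => (v : V)) := by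
  refine ⟨fun a b => ?_, fun v => ?_⟩
  · rw [hdist, div_one, one_mul]
    exact ⟨sub_le_self _ R.cast_nonneg, le_add_of_nonneg_right R.cast_nonneg⟩
  · obtain ⟨w, hw, hvw⟩ := hR v
    exact ⟨⟨w, hw⟩, by exact_mod_cast hvw⟩

end Paper

open Paper in
theorem stmt4_general {V G₀ : Type*} [Group G₀] (Γ : SimpleGraph V)
    (hinf : Infinite V) (hc : Γ.Connected) (hlf : LocFin Γ)
    (l B : ℝ) (hl : 1 ≤ l)
    (φ : G₀ → V → V) (hqa : IsQAct Γ l φ) (hcb : Cobdd Γ B φ)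
    (hvs : VsGe Γ 2) :
    ∃ Γ₀ : Γ.Subgraph,
      (Γ₀.verts.Infinite ∧ TwoConnected Γ₀.coe ∧
        ∀ L : Γ.Subgraph, L.verts.Infinite → TwoConnected L.coe → Γ₀ ≤ L → L = Γ₀) ∧
      (∀ L : Γ.Subgraph,
        (L.verts.Infinite ∧ TwoConnected L.coe ∧
          ∀ L' : Γ.Subgraph, L'.verts.Infinite → TwoConnected L'.coe → L ≤ L' → L' = L) →
        L = Γ₀) ∧
      (∃ C : ℝ, 0 ≤ C ∧ ∀ v : V, ∃ w ∈ Γ₀.verts, (Γ.dist v w : ℝ) ≤ C) ∧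
      (∃ l' e' : ℝ, 1 ≤ l' ∧ 0 ≤ e' ∧ IsQI Γ₀.coe Γ l' e' (fun v => (v : V))) := by
  obtain ⟨R, hR⟩ := exists_forall_isPocket_dist_le hc hlf (by linarith) hqa hcb
  have hs : ∀ ⦃x y⦄ (P : Γ.Walk x y), P.IsPath → x ∈ core Γ → y ∈ core Γ →
      ∀ u ∈ P.support, u ∈ core Γ := fun _ _ _ hP hx hy _ =>
    mem_core_of_mem_support_of_isPath hP hx hy
  have hcore := core_infinite hc hlf hR
  have h2 : TwoConnected ((⊤ : Γ.Subgraph).induce (core Γ)).coe := by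
    rw [← induce_eq_coe_induce_top]
    exact twoConnected_induce hs hc (by simp [hcore.encard_eq])
      fun _ _ _ hx _ hy => reachOut_of_mem_core hlf hvs hx hy
  have hle : ∀ L : Γ.Subgraph, L.verts.Infinite → TwoConnected L.coe →
      L ≤ (⊤ : Γ.Subgraph).induce (core Γ) := fun L hLi hL =>
    Subgraph.le_induce_top_verts.trans
      (Subgraph.induce_mono_right (subset_core_of_twoConnected hL hLi))
  have hdense := exists_mem_core_dist_le hc hlf hR
  refine ⟨(⊤ : Γ.Subgraph).induce (core Γ), ⟨hcore, h2, fun L hLi hL h => le_antisymm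
    (hle L hLi hL) h⟩, fun L ⟨hLi, hL, hmax⟩ => (hmax _ hcore h2 (hle L hLi hL)).symm,
    ⟨R, R.cast_nonneg, fun v => ?_⟩, ⟨1, R, le_rfl, R.cast_nonneg, isQI_val_of_dist_eq _
    (fun a b => ?_) hdense⟩⟩
  · obtain ⟨w, hw, hvw⟩ := hdense v
    exact ⟨w, hw, by exact_mod_cast hvw⟩
  · rw [← induce_eq_coe_induce_top]
    exact dist_induce_eq hs hc a b

open Paper in
theorem stmt4 {V G₀ : Type*} [Group G₀] (Γ : SimpleGraph V)
    (hinf : Infinite V) (hc : Γ.Connected) (hlf : LocFin Γ)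
    (l B : ℝ) (hl : 1 ≤ l) (hB : 0 ≤ B)
    (φ : G₀ → V → V) (hqa : IsQAct Γ l φ) (hcb : Cobdd Γ B φ)
    (hvs : VsGe Γ 2) :
    ∃ Γ₀ : Γ.Subgraph,
      (Γ₀.verts.Infinite ∧ TwoConnected Γ₀.coe ∧
        ∀ L : Γ.Subgraph, L.verts.Infinite → TwoConnected L.coe → Γ₀ ≤ L → L = Γ₀) ∧
      (∀ L : Γ.Subgraph,
        (L.verts.Infinite ∧ TwoConnected L.coe ∧
          ∀ L' : Γ.Subgraph, L'.verts.Infinite → TwoConnected L'.coe → L ≤ L' → L' = L) →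
        L = Γ₀) ∧
      (∃ C : ℝ, 0 ≤ C ∧ ∀ v : V, ∃ w ∈ Γ₀.verts, (Γ.dist v w : ℝ) ≤ C) ∧
      (∃ l' e' : ℝ, 1 ≤ l' ∧ 0 ≤ e' ∧ IsQI Γ₀.coe Γ l' e' (fun v => (v : V))) :=
  stmt4_general Γ hinf hc hlf l B hl φ hqa hcb hvs
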